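/- In the complex reflection group G(4,2,2) (matrices of G(4,1,2) with determinant ±1), the element g = diag(i, i) satisfies codim V^g = 2, but g cannot be written as a product of two reflections in G(4,2,2); hence reflection length does not equal fixed-space codimension in general complex reflection groups. -/

import Mathlib

/-! Every reflection of `G(4,2,2)` has determinant `-1`. Indeed, a fixed vector of a `2 × 2`
matrix `M` means `det (M - 1) = det M - tr M + 1 = 0`; if `det M = 1` this gives `tr M = 2`,
which excludes the antidiagonal shape (trace `0`) and, for `M = diag(a, b)` with `ab = 1`,
forces `a = b = 1`. So a product of two reflections has determinant `1`, while
`det (diag(i, i)) = -1`. -/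

open Module Submodule

/-- `M` is a monomial matrix whose nonzero entries are `r`-th roots of unity, i.e. an
element of `G(r,1,n)` in its natural representation on `ℂⁿ`. -/
def IsMonomialMat (r n : ℕ) (M : Matrix (Fin n) (Fin n) ℂ) : Prop :=
  ∃ (σ : Equiv.Perm (Fin n)) (c : Fin n → ℂ), (∀ j, c j ^ r = 1) ∧
    ∀ i j, M i j = if i = σ j then c j else 0

/-- Membership in `G(4,2,2)`: an element of `G(4,1,2)` of determinant `±1`. -/
def MemG422 (M : Matrix (Fin 2) (Fin 2) ℂ) : Prop :=
  IsMonomialMat 4 2 M ∧ (M.det = 1 ∨ M.det = -1)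

/-- The fixed subspace of a matrix `M` on `ℂ²`. -/
noncomputable def fixedMat (M : Matrix (Fin 2) (Fin 2) ℂ) : Submodule ℂ (Fin 2 → ℂ) :=
  LinearMap.ker (M.mulVecLin - LinearMap.id)

/-- `M` is a reflection in `G(4,2,2)`: a nonidentity element fixing a hyperplane
(a line in `ℂ²`) pointwise. -/
def IsReflG422 (M : Matrix (Fin 2) (Fin 2) ℂ) : Prop :=
  MemG422 M ∧ M ≠ 1 ∧ finrank ℂ (fixedMat M) = 1

lemma finrank_fixedMat_eq_zero_iff (M : Matrix (Fin 2) (Fin 2) ℂ) :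
    finrank ℂ (fixedMat M) = 0 ↔ (M - 1).det ≠ 0 := by
  rw [finrank_eq_zero, ne_eq, ← Matrix.exists_mulVec_eq_zero_iff, Submodule.eq_bot_iff]
  simp only [fixedMat, LinearMap.mem_ker, LinearMap.sub_apply, Matrix.mulVecLin_apply,
    LinearMap.id_apply, Matrix.sub_mulVec, Matrix.one_mulVec, ne_eq, not_exists, not_and,
    not_imp_not]

lemma isMonomialMat_diagonal {r n : ℕ} {c : Fin n → ℂ} (hc : ∀ j, c j ^ r = 1) :
    IsMonomialMat r n (Matrix.diagonal c) :=
  ⟨1, c, hc, fun i j => by by_cases h : i = j <;> simp [h]⟩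

lemma IsMonomialMat.fin_two {r : ℕ} {M : Matrix (Fin 2) (Fin 2) ℂ} (hM : IsMonomialMat r 2 M) :
    (M 0 1 = 0 ∧ M 1 0 = 0) ∨ (M 0 0 = 0 ∧ M 1 1 = 0) := by
  obtain ⟨σ, c, -, hσ⟩ := hM
  have hσ1 : σ 1 ≠ σ 0 := σ.injective.ne (by decide)
  rcases Fin.exists_fin_two.mp ⟨σ 0, rfl⟩ with h0 | h0
  · obtain h1 : σ 1 = 1 := by omega
    left; simp [hσ, h0, h1]
  · obtain h1 : σ 1 = 0 := by omega
    right; simp [hσ, h0, h1]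

lemma IsMonomialMat.eq_one_of_det {r : ℕ} {M : Matrix (Fin 2) (Fin 2) ℂ}
    (hM : IsMonomialMat r 2 M) (hdet : M.det = 1) (hfix : (M - 1).det = 0) : M = 1 := by
  rw [Matrix.det_fin_two] at hdet hfix
  simp only [Matrix.sub_apply, Matrix.one_apply_eq, Matrix.one_apply_ne Fin.zero_ne_one,
    Matrix.one_apply_ne Fin.zero_ne_one.symm] at hfix
  rcases hM.fin_two with ⟨h01, h10⟩ | ⟨h00, h11⟩
  · simp only [h01, h10, sub_self, zero_mul, sub_zero] at hdet hfix
    -- `(a - 1)(b - 1) = 0` and `ab = 1` force `(a - 1)² = 0`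
    have h00 : M 0 0 = 1 := by
      have : (M 0 0 - 1) ^ 2 = 0 := by linear_combination (-M 0 0) * hfix + (M 0 0 - 1) * hdet
      exact sub_eq_zero.mp ((pow_eq_zero_iff two_ne_zero).mp this)
    have h11 : M 1 1 = 1 := by simpa [h00] using hdet
    ext i j
    fin_cases i <;> fin_cases j <;> simp [h00, h01, h10, h11]
  · -- antidiagonal: `det (M - 1) = 1 - det M`
    simp only [h00, h11, zero_sub, zero_mul] at hdet hfix
    have : (2 : ℂ) = 0 := by linear_combination hfix - hdet
    norm_num at this

lemma IsReflG422.det_eq_neg_one {M : Matrix (Fin 2) (Fin 2) ℂ} (h : IsReflG422 M) :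
    M.det = -1 := by
  obtain ⟨⟨hM, hdet⟩, hne, hrank⟩ := h
  refine hdet.resolve_left fun hdet_one => hne (hM.eq_one_of_det hdet_one ?_)
  by_contra hfix
  rw [(finrank_fixedMat_eq_zero_iff M).mpr hfix] at hrank
  exact zero_ne_one hrank

/-- In `G(4,2,2)`, the element `g = diag(i,i)` has `codim V^g = 2` (its fixed space is
zero), yet it is not a product of two reflections of `G(4,2,2)`; so reflection length
need not equal the codimension of the fixed space for complex reflection groups. -/
theorem G422_counterexample :
    MemG422 (Matrix.diagonal (fun _ => Complex.I)) ∧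
    finrank ℂ (fixedMat (Matrix.diagonal (fun _ => Complex.I))) = 0 ∧
    ¬ ∃ s t : Matrix (Fin 2) (Fin 2) ℂ, IsReflG422 s ∧ IsReflG422 t ∧
        s * t = Matrix.diagonal (fun _ => Complex.I) := by
  have hdet : (Matrix.diagonal fun _ : Fin 2 => Complex.I).det = -1 := by
    simp [Matrix.det_diagonal]
  refine ⟨⟨isMonomialMat_diagonal fun _ => Complex.I_pow_four, .inr hdet⟩, ?_, ?_⟩
  · rw [finrank_fixedMat_eq_zero_iff, ← Matrix.diagonal_one, Matrix.diagonal_sub,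
      Matrix.det_diagonal, Fin.prod_univ_two]
    exact mul_self_ne_zero.mpr (sub_ne_zero.mpr (by simp [Complex.ext_iff]))
  · rintro ⟨s, t, hs, ht, hst⟩
    have hdet_st := congrArg Matrix.det hst
    rw [Matrix.det_mul, hs.det_eq_neg_one, ht.det_eq_neg_one, hdet] at hdet_st
    norm_num at hdet_st
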